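/- arXiv:2407.02609 — 2 statements merged into one kernel-verified Lean document; each statement's English description precedes it below -/
import Mathlib

section
/- For every α ≥ 1 there is a constant c = c(α) such that for all v, w ∈ ℝ: |v - w|^{α+1} ≤ c · 𝔟_α[v,w]. -/
/-!
The derivative of `x ↦ |x| ^ (α + 1)` is `(α + 1)` times the signed power `|x| ^ (α - 1) * x`,
so `(α + 1) 𝔟_α[v,w]` is the integral over `[v, w]` of the increment of the signed power from `v`.
That increment is at least `2 ^ (1 - α) (t - v) ^ α`: for arguments of equal sign by
superadditivity of `x ↦ x ^ α`, and for arguments of opposite sign by the power-mean inequality.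
Integrating gives `2 ^ (1 - α) |v - w| ^ (α + 1) ≤ (α + 1) 𝔟_α[v,w]`.
-/

open Real Set

noncomputable def signedPow (α x : ℝ) : ℝ := |x| ^ (α - 1) * x

/-- `bregmanPow α v w` is `𝔟_α[v,w]`. -/
noncomputable def bregmanPow (α v w : ℝ) : ℝ :=
  1 / (α + 1) * (|w| ^ (α + 1) - |v| ^ (α + 1)) + signedPow α v * (v - w)

section SignedPow

variable {α : ℝ}

lemma signedPow_neg (x : ℝ) : signedPow α (-x) = -signedPow α x := by
  simp [signedPow]

lemma signedPow_of_nonneg (hα : α ≠ 0) {x : ℝ} (hx : 0 ≤ x) : signedPow α x = x ^ α := by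
  rw [signedPow, abs_of_nonneg hx, ← rpow_add_one' hx (by simpa using hα), sub_add_cancel]

lemma signedPow_of_nonpos (hα : α ≠ 0) {x : ℝ} (hx : x ≤ 0) : signedPow α x = -(-x) ^ α := by
  rw [← signedPow_of_nonneg hα (neg_nonneg.2 hx), signedPow_neg, neg_neg]

lemma hasDerivAt_abs_rpow_add_one (hα : 0 < α) (x : ℝ) :
    HasDerivAt (fun x ↦ |x| ^ (α + 1)) ((α + 1) * signedPow α x) x := by
  convert hasDerivAt_abs_rpow x (by linarith : 1 < α + 1) using 1
  rw [signedPow, show α + 1 - 2 = α - 1 by ring, mul_assoc]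

end SignedPow

lemma rpow_sub_le_rpow_sub_rpow {a b p : ℝ} (hb : 0 ≤ b) (hba : b ≤ a) (hp : 1 ≤ p) :
    (a - b) ^ p ≤ a ^ p - b ^ p := by
  have h := add_rpow_le_rpow_add (sub_nonneg.2 hba) hb hp
  rw [sub_add_cancel] at h
  linarith

lemma two_rpow_one_sub_mul_rpow_add_le {a b p : ℝ} (ha : 0 ≤ a) (hb : 0 ≤ b) (hp : 1 ≤ p) :
    2 ^ (1 - p) * (a + b) ^ p ≤ a ^ p + b ^ p := by
  lift a to NNReal using ha
  lift b to NNReal using hb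
  have h : ((a + b : NNReal) : ℝ) ^ p ≤ 2 ^ (p - 1) * ((a : ℝ) ^ p + (b : ℝ) ^ p) := by
    exact_mod_cast NNReal.rpow_add_le_mul_rpow_add_rpow a b hp
  have h2 : (2 : ℝ) ^ (1 - p) * 2 ^ (p - 1) = 1 := by
    rw [← rpow_add two_pos]
    norm_num
  calc 2 ^ (1 - p) * ((a : ℝ) + b) ^ p
      ≤ 2 ^ (1 - p) * (2 ^ (p - 1) * ((a : ℝ) ^ p + (b : ℝ) ^ p)) := by
        gcongr
        exact_mod_cast h
    _ = (a : ℝ) ^ p + (b : ℝ) ^ p := by rw [← mul_assoc, h2, one_mul]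

lemma two_rpow_one_sub_mul_rpow_sub_le_signedPow_sub {α a b : ℝ} (hα : 1 ≤ α) (hba : b ≤ a) :
    2 ^ (1 - α) * (a - b) ^ α ≤ signedPow α a - signedPow α b := by
  have hα0 : α ≠ 0 := by positivity
  have same_sign : ∀ a b : ℝ, 0 ≤ b → b ≤ a →
      2 ^ (1 - α) * (a - b) ^ α ≤ signedPow α a - signedPow α b := by
    intro a b hb hba
    rw [signedPow_of_nonneg hα0 (hb.trans hba), signedPow_of_nonneg hα0 hb]
    calc 2 ^ (1 - α) * (a - b) ^ α ≤ (a - b) ^ α :=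
          mul_le_of_le_one_left (rpow_nonneg (sub_nonneg.2 hba) α)
            (rpow_le_one_of_one_le_of_nonpos one_le_two (by linarith))
      _ ≤ a ^ α - b ^ α := rpow_sub_le_rpow_sub_rpow hb hba hα
  rcases le_total 0 b with hb | hb
  · exact same_sign a b hb hba
  rcases le_total a 0 with ha | ha
  · have h := same_sign (-b) (-a) (neg_nonneg.2 ha) (neg_le_neg hba)
    rwa [signedPow_neg, signedPow_neg, neg_sub_neg, neg_sub_neg] at h
  · rw [signedPow_of_nonneg hα0 ha, signedPow_of_nonpos hα0 hb, sub_neg_eq_add, sub_eq_add_neg]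
    exact two_rpow_one_sub_mul_rpow_add_le ha (neg_nonneg.2 hb) hα

lemma mul_rpow_le_sub_sub_deriv_mul {f f' : ℝ → ℝ} {c p s t : ℝ}
    (hf : ∀ x, HasDerivAt f (f' x) x) (hp : 0 ≤ p)
    (hf' : ∀ x, s ≤ x → (p + 1) * c * (x - s) ^ p ≤ f' x - f' s) (hst : s ≤ t) :
    c * (t - s) ^ (p + 1) ≤ f t - f s - f' s * (t - s) := by
  have hp1 : p + 1 ≠ 0 := by positivity
  set g : ℝ → ℝ := fun x ↦ f x - f' s * x - c * (x - s) ^ (p + 1)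
  have hg : ∀ x, HasDerivAt g (f' x - f' s - (p + 1) * c * (x - s) ^ p) x := by
    intro x
    have h := ((hasDerivAt_id' x).sub_const s).rpow_const (p := p + 1) (Or.inr (by linarith))
    refine (((hf x).sub ((hasDerivAt_id' x).const_mul (f' s))).sub (h.const_mul c)).congr_deriv ?_
    rw [add_sub_cancel_right]
    ring
  have hmono : MonotoneOn g (Ici s) := by
    refine monotoneOn_of_hasDerivWithinAt_nonneg (convex_Ici s)
      (fun x _ ↦ (hg x).continuousAt.continuousWithinAt) (fun x _ ↦ (hg x).hasDerivWithinAt) ?_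
    intro x hx
    rw [interior_Ici] at hx
    linarith [hf' x hx.out.le]
  have h := hmono self_mem_Ici hst hst
  simp only [g, sub_self, zero_rpow hp1, mul_zero, sub_zero] at h
  linarith

lemma bregmanPow_neg (α v w : ℝ) : bregmanPow α (-v) (-w) = bregmanPow α v w := by
  simp only [bregmanPow, signedPow_neg, abs_neg]
  ring

lemma two_rpow_one_sub_mul_abs_sub_rpow_le_bregmanPow {α : ℝ} (hα : 1 ≤ α) (v w : ℝ) :
    2 ^ (1 - α) * |v - w| ^ (α + 1) ≤ (α + 1) * bregmanPow α v w := by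
  have of_le : ∀ v w : ℝ, v ≤ w →
      2 ^ (1 - α) * |v - w| ^ (α + 1) ≤ (α + 1) * bregmanPow α v w := by
    intro v w hvw
    have h := mul_rpow_le_sub_sub_deriv_mul (p := α) (hasDerivAt_abs_rpow_add_one (α := α) (by linarith))
      (by linarith) (fun x hx ↦ by
        rw [mul_assoc, ← mul_sub]
        gcongr
        exact two_rpow_one_sub_mul_rpow_sub_le_signedPow_sub hα hx) hvw
    calc 2 ^ (1 - α) * |v - w| ^ (α + 1) = 2 ^ (1 - α) * (w - v) ^ (α + 1) := by
          rw [abs_sub_comm, abs_of_nonneg (sub_nonneg.2 hvw)]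
      _ ≤ |w| ^ (α + 1) - |v| ^ (α + 1) - (α + 1) * signedPow α v * (w - v) := h
      _ = (α + 1) * bregmanPow α v w := by
        rw [bregmanPow]
        field_simp
        ring
  rcases le_total v w with hvw | hwv
  · exact of_le v w hvw
  · have h := of_le (-v) (-w) (neg_le_neg hwv)
    rwa [bregmanPow_neg, neg_sub_neg, abs_sub_comm] at h

theorem diff_pow_le_bregman (α : ℝ) (hα : 1 ≤ α) :
    ∃ c : ℝ, 0 < c ∧ ∀ v w : ℝ,
      |v - w| ^ (α + 1) ≤
        c * ((1 / (α + 1)) * (|w| ^ (α + 1) - |v| ^ (α + 1)) +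
          (|v| ^ (α - 1) * v) * (v - w)) := by
  refine ⟨(α + 1) * 2 ^ (α - 1), by positivity, fun v w ↦ ?_⟩
  calc |v - w| ^ (α + 1) = 2 ^ (α - 1) * (2 ^ (1 - α) * |v - w| ^ (α + 1)) := by
        rw [← mul_assoc, ← rpow_add two_pos]
        norm_num
    _ ≤ 2 ^ (α - 1) * ((α + 1) * bregmanPow α v w) :=
        mul_le_mul_of_nonneg_left (two_rpow_one_sub_mul_abs_sub_rpow_le_bregmanPow hα v w)
          (by positivity)
    _ = (α + 1) * 2 ^ (α - 1) * bregmanPow α v w := by ring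
end

section
/- Let α ∈ (0,1), let Ω ⊂ ℝ^N be measurable, and let v, w ∈ L^{α+1}(Ω). Then ∫_Ω |v - w|^{α+1} dx ≤ c(α) · (∫_Ω |v|^{α+1} + |w|^{α+1} dx)^{(1-α)/2} · (∫_Ω (|v|^{α-1}v - |w|^{α-1}w)(v - w) dx)^{(α+1)/2}. -/
/-!
Write `φ t = |t| ^ (α - 1) * t`, `D = (φ a - φ b) * (a - b)` and
`M = |a| ^ (α + 1) + |b| ^ (α + 1)`. The pointwise estimate `α (a - b)² ≤ D (|a| + |b|) ^ (1 - α)`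
reduces by symmetry to `|b| ≤ a`; for `b ≥ 0` it is the concavity of `t ↦ t ^ α` (weighted AM-GM),
for `b ≤ 0` its subadditivity. Raising it to the power `(α + 1) / 2` and bounding `|a| + |b|` by
`2 max |a| |b|` gives `|a - b| ^ (α + 1) ≤ c M ^ ((1 - α) / 2) D ^ ((α + 1) / 2)`, and Hölder's
inequality with the exponents `2 / (1 - α)` and `2 / (α + 1)` integrates this bound.
-/

open MeasureTheory

noncomputable def signedRpow (α t : ℝ) : ℝ := |t| ^ (α - 1) * t

section SignedRpow

variable {α : ℝ}

lemma signedRpow_of_nonneg (hα : α ≠ 0) {t : ℝ} (ht : 0 ≤ t) : signedRpow α t = t ^ α := by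
  rw [signedRpow, abs_of_nonneg ht, ← Real.rpow_add_one' ht (by simpa), sub_add_cancel]

lemma signedRpow_neg (α t : ℝ) : signedRpow α (-t) = -signedRpow α t := by
  simp [signedRpow]

lemma abs_signedRpow (hα : α ≠ 0) (t : ℝ) : |signedRpow α t| = |t| ^ α := by
  rw [signedRpow, abs_mul, abs_of_nonneg (by positivity),
    ← Real.rpow_add_one' (abs_nonneg t) (by simpa), sub_add_cancel]

lemma measurable_signedRpow (α : ℝ) : Measurable (signedRpow α) := by
  unfold signedRpow
  fun_prop

lemma monotone_signedRpow (hα : 0 < α) : Monotone (signedRpow α) := by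
  refine monotone_of_odd_of_monotoneOn_nonneg (signedRpow_neg α) fun s hs t ht hst => ?_
  rw [signedRpow_of_nonneg hα.ne' hs, signedRpow_of_nonneg hα.ne' ht]
  exact Real.rpow_le_rpow hs hst hα.le

lemma signedRpow_sub_mul_sub_nonneg (hα : 0 < α) (a b : ℝ) :
    0 ≤ (signedRpow α a - signedRpow α b) * (a - b) := by
  rcases le_total b a with h | h
  · exact mul_nonneg (sub_nonneg.2 (monotone_signedRpow hα h)) (sub_nonneg.2 h)
  · exact mul_nonneg_of_nonpos_of_nonpos (sub_nonpos.2 (monotone_signedRpow hα h))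
      (sub_nonpos.2 h)

lemma mul_sq_sub_le_of_abs_le (hα0 : 0 < α) (hα1 : α ≤ 1) {a b : ℝ} (hba : |b| ≤ a) :
    α * (a - b) ^ 2 ≤ (signedRpow α a - signedRpow α b) * (a - b) * (|a| + |b|) ^ (1 - α) := by
  have ha : 0 ≤ a := (abs_nonneg b).trans hba
  have hsplit : ∀ {x : ℝ}, 0 ≤ x → x ^ (1 - α) * x ^ α = x := fun hx => by
    rw [← Real.rpow_add' hx (by norm_num), sub_add_cancel, Real.rpow_one]
  rcases le_total 0 b with hb | hb
  · have amgm : a ^ (1 - α) * b ^ α ≤ (1 - α) * a + α * b :=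
      Real.geom_mean_le_arith_mean2_weighted (by linarith) hα0.le ha hb (by ring)
    have hD := signedRpow_sub_mul_sub_nonneg hα0 a b
    rw [signedRpow_of_nonneg hα0.ne' ha, signedRpow_of_nonneg hα0.ne' hb] at hD ⊢
    have hmono : a ^ (1 - α) ≤ (|a| + |b|) ^ (1 - α) :=
      Real.rpow_le_rpow ha (by rw [abs_of_nonneg ha]; linarith [abs_nonneg b]) (by linarith)
    calc α * (a - b) ^ 2 ≤ a ^ (1 - α) * (a ^ α - b ^ α) * (a - b) := by
          have := hsplit ha
          nlinarith [sub_nonneg.2 (le_of_abs_le hba)]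
      _ = (a ^ α - b ^ α) * (a - b) * a ^ (1 - α) := by ring
      _ ≤ _ := mul_le_mul_of_nonneg_left hmono hD
  · have hm : 0 ≤ -b := by linarith
    have hs : |a| + |b| = a - b := by rw [abs_of_nonneg ha, abs_of_nonpos hb]; ring
    have hsub : (a - b) ^ α ≤ a ^ α + (-b) ^ α := by
      simpa [sub_eq_add_neg] using Real.rpow_add_le_add_rpow ha hm hα0.le hα1
    rw [← neg_neg b, signedRpow_neg, signedRpow_of_nonneg hα0.ne' ha,
      signedRpow_of_nonneg hα0.ne' hm, neg_neg, hs]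
    have hab : 0 ≤ a - b := by linarith
    calc α * (a - b) ^ 2 ≤ (a - b) ^ (1 - α) * (a - b) ^ α * (a - b) := by
          rw [hsplit hab]; nlinarith
      _ ≤ (a - b) ^ (1 - α) * (a ^ α + (-b) ^ α) * (a - b) := by gcongr
      _ = _ := by ring

lemma mul_sq_sub_le_signedRpow_sub_mul_sub (hα0 : 0 < α) (hα1 : α ≤ 1) (a b : ℝ) :
    α * (a - b) ^ 2 ≤ (signedRpow α a - signedRpow α b) * (a - b) * (|a| + |b|) ^ (1 - α) := by
  wlog hab : |b| ≤ |a| generalizing a b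
  · have := this b a (by linarith)
    rw [add_comm |b|] at this
    linarith
  rcases le_total 0 a with ha | ha
  · exact mul_sq_sub_le_of_abs_le hα0 hα1 (by rwa [abs_of_nonneg ha] at hab)
  · have := mul_sq_sub_le_of_abs_le hα0 hα1 (a := -a) (b := -b)
      (by rwa [abs_neg, ← abs_of_nonpos ha])
    simp only [signedRpow_neg, abs_neg] at this
    linarith


lemma rpow_max_abs_le_add (p a b : ℝ) : max |a| |b| ^ p ≤ |a| ^ p + |b| ^ p := by
  rcases le_total |a| |b| with h | h
  · rw [max_eq_right h]; linarith [Real.rpow_nonneg (abs_nonneg a) p]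
  · rw [max_eq_left h]; linarith [Real.rpow_nonneg (abs_nonneg b) p]

lemma signedRpow_sub_mul_sub_le (hα : 0 < α) (a b : ℝ) :
    (signedRpow α a - signedRpow α b) * (a - b) ≤ 4 * (|a| ^ (α + 1) + |b| ^ (α + 1)) := by
  set t := max |a| |b|
  have ht : 0 ≤ t := (abs_nonneg a).trans (le_max_left _ _)
  have hφ : |signedRpow α a - signedRpow α b| ≤ 2 * t ^ α := by
    have := abs_sub (signedRpow α a) (signedRpow α b)
    rw [abs_signedRpow hα.ne', abs_signedRpow hα.ne'] at this
    have := Real.rpow_le_rpow (abs_nonneg a) (le_max_left |a| |b|) hα.le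
    have := Real.rpow_le_rpow (abs_nonneg b) (le_max_right |a| |b|) hα.le
    linarith
  have hsub : |a - b| ≤ 2 * t := by
    linarith [abs_sub a b, le_max_left |a| |b|, le_max_right |a| |b|]
  calc (signedRpow α a - signedRpow α b) * (a - b)
      ≤ |signedRpow α a - signedRpow α b| * |a - b| := by rw [← abs_mul]; exact le_abs_self _
    _ ≤ 2 * t ^ α * (2 * t) := by gcongr
    _ = 4 * t ^ (α + 1) := by rw [Real.rpow_add_one' ht (by linarith)]; ring
    _ ≤ _ := by gcongr; exact rpow_max_abs_le_add _ a b

lemma abs_sub_rpow_le (hα0 : 0 < α) (hα1 : α < 1) (a b : ℝ) :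
    |a - b| ^ (α + 1) ≤ (2 ^ (1 - α) / α) ^ ((α + 1) / 2) *
      ((|a| ^ (α + 1) + |b| ^ (α + 1)) ^ ((1 - α) / 2) *
        ((signedRpow α a - signedRpow α b) * (a - b)) ^ ((α + 1) / 2)) := by
  set D := (signedRpow α a - signedRpow α b) * (a - b)
  set M := |a| ^ (α + 1) + |b| ^ (α + 1)
  set t := max |a| |b|
  have ht : 0 ≤ t := (abs_nonneg a).trans (le_max_left _ _)
  have hD : 0 ≤ D := signedRpow_sub_mul_sub_nonneg hα0 a b
  have hsq : (a - b) ^ 2 ≤ 2 ^ (1 - α) / α * D * t ^ (1 - α) := by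
    have hs : (|a| + |b|) ^ (1 - α) ≤ (2 * t) ^ (1 - α) :=
      Real.rpow_le_rpow (by positivity) (by linarith [le_max_left |a| |b|, le_max_right |a| |b|])
        (by linarith)
    rw [Real.mul_rpow zero_le_two ht] at hs
    have := mul_sq_sub_le_signedRpow_sub_mul_sub hα0 hα1.le a b
    rw [div_mul_eq_mul_div, div_mul_eq_mul_div, le_div_iff₀ hα0]
    nlinarith
  have ht' : (t ^ (1 - α)) ^ ((α + 1) / 2) ≤ M ^ ((1 - α) / 2) := by
    rw [← Real.rpow_mul ht, show (1 - α) * ((α + 1) / 2) = (α + 1) * ((1 - α) / 2) by ring,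
      Real.rpow_mul ht]
    exact Real.rpow_le_rpow (by positivity) (rpow_max_abs_le_add _ a b) (by linarith)
  calc |a - b| ^ (α + 1) = ((a - b) ^ 2) ^ ((α + 1) / 2) := by
        rw [← sq_abs, ← Real.rpow_two, ← Real.rpow_mul (abs_nonneg _)]; ring_nf
    _ ≤ (2 ^ (1 - α) / α * D * t ^ (1 - α)) ^ ((α + 1) / 2) := by gcongr
    _ = (2 ^ (1 - α) / α) ^ ((α + 1) / 2) * D ^ ((α + 1) / 2) *
          (t ^ (1 - α)) ^ ((α + 1) / 2) := by
        rw [Real.mul_rpow (by positivity) (by positivity), Real.mul_rpow (by positivity) hD]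
    _ ≤ (2 ^ (1 - α) / α) ^ ((α + 1) / 2) * D ^ ((α + 1) / 2) * M ^ ((1 - α) / 2) := by gcongr
    _ = _ := by ring

end SignedRpow

section Integral
variable {X : Type*} [MeasurableSpace X] {μ : Measure X} {f g : X → ℝ}

lemma MeasureTheory.Integrable.memLp_rpow (hf : Integrable f μ) (hf0 : 0 ≤ f) {θ : ℝ}
    (hθ : 0 < θ) :
    MemLp (fun x => f x ^ θ) (ENNReal.ofReal θ⁻¹) μ := by
  have h := (memLp_norm_rpow_iff (p := 1) hf.aestronglyMeasurable
    (ENNReal.ofReal_pos.2 hθ).ne' ENNReal.ofReal_ne_top).2 (memLp_one_iff_integrable.2 hf)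
  rw [ENNReal.toReal_ofReal hθ.le, one_div, ← ENNReal.ofReal_inv_of_pos hθ] at h
  simpa only [Real.norm_of_nonneg (hf0 _)] using h

lemma integrable_rpow_mul_rpow {θ η : ℝ} (hθ : 0 < θ) (hη : 0 < η) (hθη : θ + η = 1)
    (hf : Integrable f μ) (hg : Integrable g μ) (hf0 : 0 ≤ f) (hg0 : 0 ≤ g) :
    Integrable (fun x => f x ^ θ * g x ^ η) μ := by
  refine ((hf.const_mul θ).add (hg.const_mul η)).mono'
    ((hf.memLp_rpow hf0 hθ).1.mul (hg.memLp_rpow hg0 hη).1) (.of_forall fun x => ?_)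
  rw [Real.norm_of_nonneg
    (mul_nonneg (Real.rpow_nonneg (hf0 x) θ) (Real.rpow_nonneg (hg0 x) η))]
  exact Real.geom_mean_le_arith_mean2_weighted hθ.le hη.le (hf0 x) (hg0 x) hθη

lemma integral_rpow_mul_rpow_le {θ η : ℝ} (hθ : 0 < θ) (hη : 0 < η) (hθη : θ + η = 1)
    (hf : Integrable f μ) (hg : Integrable g μ) (hf0 : 0 ≤ f) (hg0 : 0 ≤ g) :
    ∫ x, f x ^ θ * g x ^ η ∂μ ≤ (∫ x, f x ∂μ) ^ θ * (∫ x, g x ∂μ) ^ η := by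
  have hpow : ∀ {h : X → ℝ} {r : ℝ}, 0 ≤ h → r ≠ 0 → (fun x => (h x ^ r) ^ r⁻¹) = h :=
    fun hh hr => funext fun x => by rw [← Real.rpow_mul (hh x), mul_inv_cancel₀ hr, Real.rpow_one]
  have := integral_mul_le_Lp_mul_Lq_of_nonneg (Real.HolderConjugate.inv_inv hθ hη hθη)
    (.of_forall fun x => Real.rpow_nonneg (hf0 x) θ)
    (.of_forall fun x => Real.rpow_nonneg (hg0 x) η)
    (hf.memLp_rpow hf0 hθ) (hg.memLp_rpow hg0 hη)
  rwa [hpow hf0 hθ.ne', hpow hg0 hη.ne', one_div, inv_inv, one_div, inv_inv] at this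

lemma MeasureTheory.MemLp.integrable_abs_rpow {v : X → ℝ} {p : ℝ} (hp : 0 < p)
    (hv : MemLp v (ENNReal.ofReal p) μ) : Integrable (fun x => |v x| ^ p) μ := by
  simpa [ENNReal.toReal_ofReal hp.le] using
    hv.integrable_norm_rpow (ENNReal.ofReal_pos.2 hp).ne' ENNReal.ofReal_ne_top

lemma integrable_signedRpow_sub_mul_sub {α : ℝ} (hα : 0 < α) {v w : X → ℝ}
    (hv : MemLp v (ENNReal.ofReal (α + 1)) μ) (hw : MemLp w (ENNReal.ofReal (α + 1)) μ) :
    Integrable (fun x => (signedRpow α (v x) - signedRpow α (w x)) * (v x - w x)) μ := by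
  have hφ := measurable_signedRpow α
  have hv' := hv.aestronglyMeasurable.aemeasurable
  have hw' := hw.aestronglyMeasurable.aemeasurable
  refine (((hv.integrable_abs_rpow (by linarith)).add
    (hw.integrable_abs_rpow (by linarith))).const_mul 4).mono'
    (((hφ.comp_aemeasurable hv').sub (hφ.comp_aemeasurable hw')).mul
      (hv'.sub hw')).aestronglyMeasurable (.of_forall fun x => ?_)
  rw [Real.norm_of_nonneg (signedRpow_sub_mul_sub_nonneg hα _ _)]
  exact signedRpow_sub_mul_sub_le hα _ _

end Integral

theorem integral_alpha_inequality (α : ℝ) (hα0 : 0 < α) (hα1 : α < 1) :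
    ∃ c : ℝ, 0 < c ∧ ∀ (N : ℕ) (Ω : Set (Fin N → ℝ)), MeasurableSet Ω →
      ∀ v w : (Fin N → ℝ) → ℝ,
        MemLp v (ENNReal.ofReal (α + 1)) (volume.restrict Ω) →
        MemLp w (ENNReal.ofReal (α + 1)) (volume.restrict Ω) →
        (∫ x in Ω, |v x - w x| ^ (α + 1)) ≤
          c * (∫ x in Ω, (|v x| ^ (α + 1) + |w x| ^ (α + 1))) ^ ((1 - α) / 2) *
            (∫ x in Ω, ((|v x| ^ (α - 1) * v x) - (|w x| ^ (α - 1) * w x)) * (v x - w x))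
              ^ ((α + 1) / 2) := by
  refine ⟨(2 ^ (1 - α) / α) ^ ((α + 1) / 2), by positivity, fun N Ω _ v w hv hw => ?_⟩
  have hθ : 0 < (1 - α) / 2 := by linarith
  have hη : 0 < (α + 1) / 2 := by linarith
  have hθη : (1 - α) / 2 + (α + 1) / 2 = 1 := by ring
  have hM := (hv.integrable_abs_rpow (by linarith)).add (hw.integrable_abs_rpow (by linarith))
  have hM0 : 0 ≤ fun x => |v x| ^ (α + 1) + |w x| ^ (α + 1) := fun x => by positivity
  have hD := integrable_signedRpow_sub_mul_sub hα0 hv hw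
  have hD0 : 0 ≤ fun x => (signedRpow α (v x) - signedRpow α (w x)) * (v x - w x) :=
    fun x => signedRpow_sub_mul_sub_nonneg hα0 _ _
  calc (∫ x in Ω, |v x - w x| ^ (α + 1))
      ≤ ∫ x in Ω, (2 ^ (1 - α) / α) ^ ((α + 1) / 2) *
          ((|v x| ^ (α + 1) + |w x| ^ (α + 1)) ^ ((1 - α) / 2) *
            ((signedRpow α (v x) - signedRpow α (w x)) * (v x - w x)) ^ ((α + 1) / 2)) :=
        integral_mono_of_nonneg (.of_forall fun x => by positivity)
          ((integrable_rpow_mul_rpow hθ hη hθη hM hD hM0 hD0).const_mul _)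
          (.of_forall fun x => abs_sub_rpow_le hα0 hα1 (v x) (w x))
    _ ≤ _ := by
        rw [integral_const_mul, mul_assoc]
        gcongr
        exact integral_rpow_mul_rpow_le hθ hη hθη hM hD hM0 hD0
end
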